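/- arXiv:1402.1769 — 2 statements merged into one kernel-verified Lean document; each statement's English description precedes it below -/
import Mathlib

section
/- For the stationary distribution π on ℕ₀^d \ {0} given by π_k = (e^{-2α}/(1-e^{-2α})) · ∏_{i=1}^d (2αρ_i)^{k_i}/k_i!, and for the jump rates q^b of the branching–coalescing–migrating particle-count process (coalescence at rate (1/ρ_i)·C(k_i,2) sends k → k − e_i, branching at rate α k_i sends k → k + e_i, migration at rate μ b(i,j) k_i sends k → k − e_i + e_j), the detailed balance relation π_k · q^b_{k,ℓ} = π_ℓ · q^a_{ℓ,k} holds for all k, ℓ ∈ ℕ₀^d \ {0}, where q^a denotes the same rates with b(i,j) replaced by a(i,j) := (ρ_j/ρ_i) b(j,i). -/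
/-!
Up to its normalising constant, `π` is the product of Poisson weights
`w k = ∏ i, (2αρᵢ) ^ kᵢ / kᵢ!`, which satisfy `(kᵢ + 1) * w (k + eᵢ) = 2αρᵢ * w k`.
Detailed balance then holds transition by transition: the coalescence `l + eᵢ → l` is
balanced by the branching `l → l + eᵢ`, because `2αρᵢ / (lᵢ + 1) * ρᵢ⁻¹ * C(lᵢ + 1, 2) = α lᵢ`,
and the `b`-migration `m + eᵢ → m + eⱼ` by the `a`-migration back, both sides being
`2αμ ρᵢ b(i,j) * w m`.
-/

open Finset

def poissonWeight {ι K : Type*} [Fintype ι] [Field K] (c : ι → K) (k : ι → ℕ) : K :=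
  ∏ i, c i ^ k i / (k i).factorial

section PoissonWeight

variable {ι K : Type*} [Fintype ι] [DecidableEq ι] [Field K] [CharZero K]

lemma pow_succ_div_factorial_succ_mul (x : K) (n : ℕ) :
    x ^ (n + 1) / (n + 1).factorial * (n + 1) = x * (x ^ n / n.factorial) := by
  rw [Nat.factorial_succ]
  push_cast
  field_simp
  ring

lemma poissonWeight_add_single_mul (c : ι → K) (k : ι → ℕ) (i : ι) :
    poissonWeight c (k + Pi.single i 1) * (k i + 1) = c i * poissonWeight c k := by
  unfold poissonWeight
  rw [Fintype.prod_eq_mul_prod_compl i, Fintype.prod_eq_mul_prod_compl i (fun m => c m ^ k m / _)]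
  have hcompl : ∀ m ∈ ({i}ᶜ : Finset ι), (k + Pi.single i 1 : ι → ℕ) m = k m := by
    intro m hm
    simp_all
  rw [prod_congr rfl fun m hm => by rw [hcompl m hm]]
  simp only [Pi.add_apply, Pi.single_eq_same]
  linear_combination (∏ m ∈ ({i}ᶜ : Finset ι), c m ^ k m / ((k m).factorial : K)) *
    pow_succ_div_factorial_succ_mul (c i) (k i)

end PoissonWeight

section Transitions

variable {ι : Type*} [DecidableEq ι] {k l : ι → ℕ} {i j : ι}

lemma eq_tsub_single_add_iff (x : ι → ℕ) (hk : k i ≠ 0) :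
    l = k - Pi.single i 1 + x ↔ l + Pi.single i 1 = k + x := by
  simp only [funext_iff, Pi.add_apply, Pi.sub_apply, Pi.single_apply]
  refine forall_congr' fun m => ?_
  split_ifs with hm
  · subst hm; omega
  · omega

/-- Truncated subtraction gives `k - eᵢ = k` when `kᵢ = 0`; as the rate vanishes there, the
transition `k → k - eᵢ + x` may be read as `l + eᵢ = k + x`. -/
lemma ite_eq_tsub_single_add [Fintype ι] {M : Type*} [Zero M] (x : ι → ℕ) {r : M}
    (hr : k i = 0 → r = 0) :
    (if l = k - Pi.single i 1 + x then r else 0) = if l + Pi.single i 1 = k + x then r else 0 := by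
  by_cases hk : k i = 0
  · simp [hr hk]
  · simp only [eq_tsub_single_add_iff x hk]

lemma exists_eq_add_single_of_add_single_eq (hij : i ≠ j)
    (h : l + Pi.single i 1 = k + Pi.single j 1) :
    ∃ m : ι → ℕ, k = m + Pi.single i 1 ∧ l = m + Pi.single j 1 := by
  have hk : k i ≠ 0 := by
    have := congrFun h i
    simp [hij] at this
    omega
  refine ⟨k - Pi.single i 1, ?_, ?_⟩
  · simpa [eq_comm] using
      (eq_tsub_single_add_iff (l := k - Pi.single i 1) 0 hk).1 (add_zero _).symm
  · exact (eq_tsub_single_add_iff _ hk).2 h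

end Transitions

section DetailedBalance

variable {ι : Type*} [Fintype ι] [DecidableEq ι] {ρ : ι → ℝ} (hρ : ∀ i, ρ i ≠ 0) {C α μ : ℝ}
include hρ

lemma coalescence_branching_balance (k l : ι → ℕ) (i : ι) :
    C * poissonWeight (fun m => 2 * α * ρ m) k *
        (if l = k - Pi.single i 1 then 1 / ρ i * ((k i).choose 2 : ℝ) else 0) =
      C * poissonWeight (fun m => 2 * α * ρ m) l *
        (if k = l + Pi.single i 1 then α * l i else 0) := by
  rw [← add_zero (k - Pi.single i 1), ite_eq_tsub_single_add _ (fun hk => by simp [hk]), add_zero]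
  by_cases hkl : k = l + Pi.single i 1
  · subst hkl
    rw [if_pos rfl, if_pos rfl]
    simp only [Pi.add_apply, Pi.single_eq_same, Nat.cast_choose_two]
    push_cast
    rw [add_sub_cancel_right]
    field_simp [hρ i]
    linear_combination (C * l i) * poissonWeight_add_single_mul (fun m => 2 * α * ρ m) l i
  · rw [if_neg (Ne.symm hkl), if_neg hkl, mul_zero, mul_zero]

lemma migration_balance {a b : ι → ι → ℝ} (ha : ∀ i j, a i j = ρ j / ρ i * b j i)
    (k l : ι → ℕ) (i j : ι) :
    C * poissonWeight (fun m => 2 * α * ρ m) k *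
        (if l = k - Pi.single i 1 + Pi.single j 1 then μ * b i j * k i else 0) =
      C * poissonWeight (fun m => 2 * α * ρ m) l *
        (if k = l - Pi.single j 1 + Pi.single i 1 then μ * a j i * l j else 0) := by
  rw [ite_eq_tsub_single_add _ (fun hk => by simp [hk]),
    ite_eq_tsub_single_add _ (fun hl => by simp [hl])]
  by_cases hkl : l + Pi.single i 1 = k + Pi.single j 1
  · rw [if_pos hkl, if_pos hkl.symm, ha]
    rcases eq_or_ne i j with rfl | hij
    · obtain rfl := add_right_cancel hkl
      field_simp [hρ i]
    · obtain ⟨m, rfl, rfl⟩ := exists_eq_add_single_of_add_single_eq hij hkl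
      simp only [Pi.add_apply, Pi.single_eq_same]
      push_cast
      field_simp [hρ j]
      linear_combination
        (C * μ * b i j * ρ j) * poissonWeight_add_single_mul (fun n => 2 * α * ρ n) m i -
          (C * μ * b i j * ρ i) * poissonWeight_add_single_mul (fun n => 2 * α * ρ n) m j
  · rw [if_neg hkl, if_neg (Ne.symm hkl), mul_zero, mul_zero]

end DetailedBalance

theorem detailed_balance_ASG_general
    (d : ℕ) (α μ : ℝ)
    (ρ : Fin d → ℝ) (hρ : ∀ i, 0 < ρ i)
    (b : Fin d → Fin d → ℝ)
    (a : Fin d → Fin d → ℝ) (ha : ∀ i j, a i j = ρ j / ρ i * b j i)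
    (π : (Fin d → ℕ) → ℝ)
    (hπ : ∀ k, π k = Real.exp (-(2 * α)) / (1 - Real.exp (-(2 * α))) *
        ∏ i, (2 * α * ρ i) ^ (k i) / (Nat.factorial (k i)))
    (q : (Fin d → Fin d → ℝ) → (Fin d → ℕ) → (Fin d → ℕ) → ℝ)
    (hq : ∀ c k l, q c k l =
        (∑ i, if l = (fun m => k m - (if m = i then 1 else 0)) then
            (1 / ρ i) * ((k i).choose 2 : ℝ) else 0)
        + (∑ i, if l = (fun m => k m + (if m = i then 1 else 0)) then
            α * (k i : ℝ) else 0)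
        + ∑ i, ∑ j, if l = (fun m => k m - (if m = i then 1 else 0)
              + (if m = j then 1 else 0)) then
            μ * c i j * (k i : ℝ) else 0) :
    ∀ k l : Fin d → ℕ, k ≠ (fun _ => 0) → l ≠ (fun _ => 0) →
      π k * q b k l = π l * q a l k := by
  intro k l _ _
  obtain rfl : π = fun k => _ * poissonWeight (fun m => 2 * α * ρ m) k := funext hπ
  have hρ₀ : ∀ i, ρ i ≠ 0 := fun i => (hρ i).ne'
  simp only [← Pi.single_apply _ (1 : ℕ), ← Pi.sub_def, ← Pi.add_def] at hq
  simp only [hq, mul_add, mul_sum, coalescence_branching_balance hρ₀, migration_balance hρ₀ ha]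
  rw [sum_comm]
  ring

/-- **Detailed balance for the structured ASG particle-count process.**
The stationary distribution `π` on `ℕ₀^d \ {0}` satisfies
`π k * q^b k ℓ = π ℓ * q^a ℓ k`, where `q^b` are the jump rates of the
branching–coalescing–migrating particle count process with backward migration
rates `b`, and `q^a` the same rates with `a i j = (ρ j / ρ i) * b j i`. -/
theorem detailed_balance_ASG
    (d : ℕ) (hd : 2 ≤ d) (α μ : ℝ) (hα : 0 < α) (hμ : 0 < μ)
    (ρ : Fin d → ℝ) (hρ : ∀ i, 0 < ρ i) (hρsum : ∑ i, ρ i = 1)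
    (b : Fin d → Fin d → ℝ) (hbnn : ∀ i j, i ≠ j → 0 ≤ b i j)
    (hbdiag : ∀ i, b i i = 0)
    (hequil : ∀ j, ∑ i, ρ i * b i j = ρ j * ∑ i, b j i)
    (a : Fin d → Fin d → ℝ) (ha : ∀ i j, a i j = ρ j / ρ i * b j i)
    (π : (Fin d → ℕ) → ℝ)
    (hπ : ∀ k, π k = Real.exp (-(2 * α)) / (1 - Real.exp (-(2 * α))) *
        ∏ i, (2 * α * ρ i) ^ (k i) / (Nat.factorial (k i)))
    (q : (Fin d → Fin d → ℝ) → (Fin d → ℕ) → (Fin d → ℕ) → ℝ)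
    (hq : ∀ c k l, q c k l =
        (∑ i, if l = (fun m => k m - (if m = i then 1 else 0)) then
            (1 / ρ i) * ((k i).choose 2 : ℝ) else 0)
        + (∑ i, if l = (fun m => k m + (if m = i then 1 else 0)) then
            α * (k i : ℝ) else 0)
        + ∑ i, ∑ j, if l = (fun m => k m - (if m = i then 1 else 0)
              + (if m = j then 1 else 0)) then
            μ * c i j * (k i : ℝ) else 0) :
    ∀ k l : Fin d → ℕ, k ≠ (fun _ => 0) → l ≠ (fun _ => 0) →
      π k * q b k l = π l * q a l k :=
  detailed_balance_ASG_general d α μ ρ hρ b a ha π hπ q hq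
end

section
/- For the interacting Wright–Fisher diffusion generator G_X and the particle-count generator G_K, the moment-duality identity G_X f_k(x) = G_K g_x(k) holds for all x ∈ [0,1]^d and k ∈ ℕ₀^d, where f_k(x) = g_x(k) = ∏_{i=1}^d (1−x_i)^{k_i}. Explicitly: (1/2)∑_i (1/ρ_i) x_i(1−x_i) ∂²f_k/∂x_i² + α∑_i x_i(1−x_i) ∂f_k/∂x_i + μ∑_{i,j} b(i,j)(x_j−x_i) ∂f_k/∂x_i equals ∑_i (1/ρ_i)C(k_i,2)[(1−x)^{k−e_i} − (1−x)^k] + α∑_i k_i[(1−x)^{k+e_i} − (1−x)^k] + μ∑_{i,j} b(i,j) k_i[(1−x)^{k−e_i+e_j} − (1−x)^k]. -/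
open Finset

private lemma derivPowAux (n : ℕ) (c : ℝ) :
    deriv (fun t : ℝ => (1 - t) ^ n * c) = fun t => (1 - t) ^ (n - 1) * (-(n : ℝ) * c) := by
  funext t
  have h1 : HasDerivAt (fun t : ℝ => 1 - t) (-1) t := by
    simpa using (hasDerivAt_id t).const_sub 1
  have h : HasDerivAt (fun t : ℝ => (1 - t) ^ n * c)
      ((n : ℝ) * (1 - t) ^ (n - 1) * (-1) * c) t := (h1.pow n).mul_const c
  rw [h.deriv]; ring

private lemma keyCoal (n : ℕ) (y c r : ℝ) :
    (1 / 2) * (1 / r * y * (1 - y) *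
        ((1 - y) ^ (n - 1 - 1) * (-((n - 1 : ℕ) : ℝ) * (-(n : ℝ) * c))))
      = 1 / r * (n.choose 2 : ℝ) * ((1 - y) ^ (n - 1) * c - (1 - y) ^ n * c) := by
  match n with
  | 0 => simp
  | 1 => simp
  | (m + 2) =>
    rw [Nat.cast_choose_two]
    push_cast
    simp only [Nat.add_sub_cancel, show m + 2 - 1 - 1 = m by omega,
      show m + 2 - 1 = m + 1 by omega, pow_succ]
    ring

private lemma keyBranch (n : ℕ) (y c : ℝ) :
    y * (1 - y) * ((1 - y) ^ (n - 1) * (-(n : ℝ) * c))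
      = (n : ℝ) * ((1 - y) ^ (n + 1) * c - (1 - y) ^ n * c) := by
  match n with
  | 0 => simp
  | (m + 1) =>
    simp only [Nat.add_sub_cancel, pow_succ]
    push_cast
    ring

/-- **Moment duality at the generator level.** For `f_k(x) = g_x(k) = ∏_i (1−x_i)^{k_i}`,
the Wright–Fisher generator applied to `f_k` at `x` equals the particle-count
generator applied to `g_x` at `k`. -/
theorem generator_duality
    (d : ℕ) (hd : 1 ≤ d) (α μ : ℝ) (hα : 0 < α) (hμ : 0 < μ)
    (ρ : Fin d → ℝ) (hρ : ∀ i, 0 < ρ i)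
    (b : Fin d → Fin d → ℝ) (hbnn : ∀ i j, i ≠ j → 0 ≤ b i j)
    (x : Fin d → ℝ) (hx : ∀ i, x i ∈ Set.Icc (0 : ℝ) 1) (k : Fin d → ℕ)
    (g : (Fin d → ℕ) → ℝ) (hg : ∀ m, g m = ∏ i, (1 - x i) ^ (m i))
    (pd1 pd2 : Fin d → ℝ)
    (hpd1 : ∀ i, pd1 i =
      deriv (fun t => ∏ j, (1 - Function.update x i t j) ^ (k j)) (x i))
    (hpd2 : ∀ i, pd2 i =
      deriv (deriv (fun t => ∏ j, (1 - Function.update x i t j) ^ (k j))) (x i)) :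
    (1 / 2) * (∑ i, (1 / ρ i) * x i * (1 - x i) * pd2 i)
      + α * (∑ i, x i * (1 - x i) * pd1 i)
      + μ * (∑ i, ∑ j, b i j * (x j - x i) * pd1 i)
    = (∑ i, (1 / ρ i) * ((k i).choose 2 : ℝ) *
          (g (fun m => k m - (if m = i then 1 else 0)) - g k))
      + α * (∑ i, (k i : ℝ) *
          (g (fun m => k m + (if m = i then 1 else 0)) - g k))
      + μ * (∑ i, ∑ j, b i j * (k i : ℝ) *
          (g (fun m => k m - (if m = i then 1 else 0) + (if m = j then 1 else 0)) - g k)) := by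
  classical
  set C : Fin d → ℝ := fun i => ∏ m ∈ univ.erase i, (1 - x m) ^ (k m) with hC
  -- the one-variable function is (1 - t)^(k i) * C i
  have hfun : ∀ i, (fun t => ∏ j, (1 - Function.update x i t j) ^ (k j))
      = fun t => (1 - t) ^ (k i) * C i := by
    intro i; funext t
    rw [← Finset.mul_prod_erase univ _ (Finset.mem_univ i)]
    simp only [Function.update_self]
    congr 1
    exact Finset.prod_congr rfl fun j hj => by
      rw [Function.update_of_ne (Finset.ne_of_mem_erase hj)]
  have hpd1' : ∀ i, pd1 i = (1 - x i) ^ (k i - 1) * (-(k i : ℝ) * C i) := by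
    intro i; rw [hpd1 i, hfun i, derivPowAux]
  have hpd2' : ∀ i, pd2 i = (1 - x i) ^ (k i - 1 - 1) *
      (-((k i - 1 : ℕ) : ℝ) * (-(k i : ℝ) * C i)) := by
    intro i; rw [hpd2 i, hfun i, derivPowAux, derivPowAux]
  -- general product extraction for g
  have hgprod : ∀ (m : Fin d → ℕ) (i : Fin d),
      g m = (1 - x i) ^ (m i) * ∏ l ∈ univ.erase i, (1 - x l) ^ (m l) := by
    intro m i
    rw [hg, ← Finset.mul_prod_erase univ _ (Finset.mem_univ i)]
  have hgk : ∀ i, g k = (1 - x i) ^ (k i) * C i := fun i => hgprod k i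
  have hgdown : ∀ i, g (fun m => k m - (if m = i then 1 else 0))
      = (1 - x i) ^ (k i - 1) * C i := by
    intro i
    rw [hgprod _ i]
    simp only [if_pos rfl]
    congr 1
    exact Finset.prod_congr rfl fun l hl => by
      rw [if_neg (Finset.ne_of_mem_erase hl), Nat.sub_zero]
  have hgup : ∀ i, g (fun m => k m + (if m = i then 1 else 0))
      = (1 - x i) ^ (k i + 1) * C i := by
    intro i
    rw [hgprod _ i]
    simp only [if_pos rfl]
    congr 1
    exact Finset.prod_congr rfl fun l hl => by
      rw [if_neg (Finset.ne_of_mem_erase hl), Nat.add_zero]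
  -- match the three groups of terms
  have E2 : (1 / 2) * (∑ i, (1 / ρ i) * x i * (1 - x i) * pd2 i)
      = ∑ i, (1 / ρ i) * ((k i).choose 2 : ℝ) *
          (g (fun m => k m - (if m = i then 1 else 0)) - g k) := by
    rw [Finset.mul_sum]
    refine Finset.sum_congr rfl fun i _ => ?_
    rw [hpd2' i, hgdown i, hgk i]
    exact keyCoal (k i) (x i) (C i) (ρ i)
  have E1 : (∑ i, x i * (1 - x i) * pd1 i)
      = ∑ i, (k i : ℝ) * (g (fun m => k m + (if m = i then 1 else 0)) - g k) := by
    refine Finset.sum_congr rfl fun i _ => ?_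
    rw [hpd1' i, hgup i, hgk i]
    exact keyBranch (k i) (x i) (C i)
  have Em : (∑ i, ∑ j, b i j * (x j - x i) * pd1 i)
      = ∑ i, ∑ j, b i j * (k i : ℝ) *
          (g (fun m => k m - (if m = i then 1 else 0) + (if m = j then 1 else 0)) - g k) := by
    refine Finset.sum_congr rfl fun i _ => Finset.sum_congr rfl fun j _ => ?_
    by_cases hij : j = i
    · subst hij
      rw [sub_self, mul_zero, zero_mul]
      rcases Nat.eq_zero_or_pos (k j) with h0 | hpos
      · rw [h0]; simp
      · have hfk : (fun m => k m - (if m = j then 1 else 0) + (if m = j then 1 else 0)) = k := by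
          funext m
          by_cases hm : m = j
          · subst hm; rw [if_pos rfl]; omega
          · simp [hm]
        rw [hfk, sub_self, mul_zero]
    · -- j ≠ i
      rcases Nat.eq_zero_or_pos (k i) with h0 | hpos
      · rw [hpd1' i, h0]
        simp
      · obtain ⟨n, hn⟩ : ∃ n, k i = n + 1 := ⟨k i - 1, by omega⟩
        -- split off i and j
        set Q : ℝ := ∏ m ∈ (univ.erase i).erase j, (1 - x m) ^ (k m) with hQ
        have hjmem : j ∈ univ.erase i := Finset.mem_erase.mpr ⟨hij, Finset.mem_univ j⟩
        have hCi : C i = (1 - x j) ^ (k j) * Q :=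
          (Finset.mul_prod_erase _ _ hjmem).symm
        have hgs : g (fun m => k m - (if m = i then 1 else 0) + (if m = j then 1 else 0))
            = (1 - x i) ^ n * ((1 - x j) ^ (k j + 1) * Q) := by
          rw [hgprod _ i, ← Finset.mul_prod_erase _ _ hjmem]
          have e1 : k i - (if i = i then 1 else 0) + (if i = j then 1 else 0) = n := by
            simp [Ne.symm hij, hn]
          have e2 : k j - (if j = i then 1 else 0) + (if j = j then 1 else 0) = k j + 1 := by
            simp [hij]
          rw [e1, e2]
          congr 2
          refine Finset.prod_congr rfl fun l hl => ?_
          have hl1 : l ≠ j := Finset.ne_of_mem_erase hl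
          have hl2 : l ≠ i := Finset.ne_of_mem_erase (Finset.mem_of_mem_erase hl)
          rw [if_neg hl2, if_neg hl1, Nat.sub_zero, Nat.add_zero]
        rw [hpd1' i, hgs, hgk i, hCi, hn]
        simp only [Nat.add_sub_cancel, pow_succ]
        push_cast
        ring
  rw [E2, E1, Em]
end
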